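/- For R ≥ 100 and β = 0.01, for every t ∈ ℝ and every w ∈ ℂ with Im[w] = −2β² and |Re[w]| ≤ (11/10)β, the imaginary part of the vector field u(t,w) = 2R w̄ + R e^{−it/2} w̄² − (i/2)w satisfies Im[u(t,w)] > 0. -/

import Mathlib

open Complex ComplexConjugate

noncomputable def vectorField (R t : ℝ) (w : ℂ) : ℂ :=
  2 * R * conj w + R * exp (-I * t / 2) * conj w ^ 2 - I / 2 * w

lemma vectorField_im (R t : ℝ) (w : ℂ) :
    (vectorField R t w).im = -2 * R * w.im + (R * exp (-I * t / 2) * conj w ^ 2).im - w.re / 2 := by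
  simp [vectorField]
  ring

lemma norm_exp_neg_I_mul_div_two (t : ℝ) : ‖exp (-I * t / 2)‖ = 1 := by
  rw [show -I * t / 2 = ((-t / 2 : ℝ) : ℂ) * I by push_cast; ring]
  exact norm_exp_ofReal_mul_I _

lemma neg_mul_normSq_le_im_mul_exp_mul_conj_sq {R : ℝ} (hR : 0 ≤ R) (t : ℝ) (w : ℂ) :
    -(R * normSq w) ≤ (R * exp (-I * t / 2) * conj w ^ 2).im := by
  have hnorm : ‖(R : ℂ) * exp (-I * t / 2) * conj w ^ 2‖ = R * normSq w := by
    rw [norm_mul, norm_mul, norm_exp_neg_I_mul_div_two, norm_pow, norm_conj, norm_real,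
      Real.norm_of_nonneg hR, Complex.sq_norm, mul_one]
  rw [← hnorm]
  exact neg_le_of_abs_le (abs_im_le_norm _)

/-- The term `-2R·Im w = 4Rβ²` dominates: the quadratic term costs at most `R|w|² ≤ (221/100)Rβ²`
and the linear one at most `(11/20)β ≤ (11/20)Rβ²`. -/
lemma vectorField_im_pos_of_im_eq {R β : ℝ} (hβ : 0 < β) (hβ_le : β ≤ 1 / 2) (hRβ : 1 ≤ R * β)
    (t : ℝ) {w : ℂ} (him : w.im = -2 * β ^ 2) (hre : |w.re| ≤ 11 / 10 * β) :
    0 < (vectorField R t w).im := by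
  have hR : 0 ≤ R := nonneg_of_mul_nonneg_left (by linarith) hβ
  have hquad := neg_mul_normSq_le_im_mul_exp_mul_conj_sq hR t w
  have hre_sq : w.re ^ 2 ≤ (11 / 10 * β) ^ 2 := sq_le_sq' (abs_le.mp hre).1 (abs_le.mp hre).2
  have him_sq : w.im ^ 2 ≤ β ^ 2 := by
    have hβ_sq : β ^ 2 ≤ 1 / 4 := by nlinarith
    rw [him]; nlinarith [mul_le_mul_of_nonneg_left hβ_sq (sq_nonneg β)]
  have hnormSq : normSq w ≤ (221 / 100) * β ^ 2 := by
    rw [normSq_apply]; nlinarith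
  rw [vectorField_im, him]
  nlinarith [mul_le_mul_of_nonneg_left hnormSq hR, (abs_le.mp hre).2]

theorem stmt_3 (R β : ℝ) (hR : R ≥ 100) (hβ : β = 0.01) (t : ℝ) (w : ℂ)
    (him : w.im = -2 * β ^ 2) (hre : |w.re| ≤ (11 / 10) * β) :
    (2 * (R : ℂ) * (starRingEnd ℂ) w
      + (R : ℂ) * Complex.exp (-Complex.I * t / 2) * (starRingEnd ℂ) w ^ 2
      - Complex.I / 2 * w).im > 0 := by
  subst hβ
  exact vectorField_im_pos_of_im_eq (by norm_num) (by norm_num) (by linarith) t him hre
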